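/- Let H be a 4-uniform linear hypergraph on n vertices with m edges, and suppose that every 4-uniform linear hypergraph H' satisfies τ(H') ≤ (n(H') + m(H'))/5. Then τ(H) ≤ n/4 + m/6. -/

import Mathlib

structure FinHypergraph (α : Type) where
  verts : Finset α
  edges : Finset (Finset α)
deriving DecidableEq

namespace FinHypergraph

variable {α : Type} [DecidableEq α]

/-- All edges are subsets of the vertex set. -/
def Wellformed (H : FinHypergraph α) : Prop := ∀ e ∈ H.edges, e ⊆ H.verts

/-- Every edge has exactly `k` vertices. -/
def Uniform (H : FinHypergraph α) (k : ℕ) : Prop := ∀ e ∈ H.edges, e.card = k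

/-- Any two distinct edges intersect in at most one vertex. -/
def Linear (H : FinHypergraph α) : Prop :=
  ∀ e ∈ H.edges, ∀ f ∈ H.edges, e ≠ f → (e ∩ f).card ≤ 1

/-- `T` is a transversal: a set of vertices meeting every edge. -/
def IsTransversal (H : FinHypergraph α) (T : Finset α) : Prop :=
  T ⊆ H.verts ∧ ∀ e ∈ H.edges, (T ∩ e).Nonempty

/-- The transversal number: minimum size of a transversal. -/
noncomputable def tau (H : FinHypergraph α) : ℕ :=
  sInf {n : ℕ | ∃ T : Finset α, H.IsTransversal T ∧ T.card = n}

/-- The degree of a vertex: the number of edges containing it. -/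
def degree (H : FinHypergraph α) (v : α) : ℕ := (H.edges.filter (fun e => v ∈ e)).card

/-- Every vertex lies in exactly `r` edges. -/
def Regular (H : FinHypergraph α) (r : ℕ) : Prop := ∀ v ∈ H.verts, H.degree v = r

/-- Delete a set `X` of vertices together with all edges meeting `X`. -/
def delete (H : FinHypergraph α) (X : Finset α) : FinHypergraph α :=
  ⟨H.verts \ X, H.edges.filter (fun e => ∀ x ∈ X, x ∉ e)⟩

end FinHypergraph

/-!
A vertex of degree at least 7 can be put into the transversal: deleting it costs 1 in `τ` but
lowers `n/4 + m/6` by at least `1/4 + 7/6 > 1`, so induction on `n` handles it. Once every degree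
is at most 6, double counting gives `4m ≤ 6n`, and then `(n + m)/5 ≤ n/4 + m/6`.
-/

namespace FinHypergraph

variable {α : Type} [DecidableEq α]

lemma tau_le_card {H : FinHypergraph α} {T : Finset α} (h : H.IsTransversal T) :
    H.tau ≤ T.card :=
  Nat.sInf_le ⟨T, h, rfl⟩

lemma tau_eq_zero_of_forall_not_isTransversal {H : FinHypergraph α}
    (h : ∀ T, ¬ H.IsTransversal T) : H.tau = 0 :=
  Nat.sInf_eq_zero.2 <| Or.inr <| Set.eq_empty_iff_forall_notMem.2 fun _ hn => by
    obtain ⟨T, hT, -⟩ := hn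
    exact h T hT

lemma exists_isTransversal_card_eq_tau {H : FinHypergraph α} (h : ∃ T, H.IsTransversal T) :
    ∃ T, H.IsTransversal T ∧ T.card = H.tau := by
  obtain ⟨T, hT⟩ := h
  exact Nat.sInf_mem (s := {n | ∃ T, H.IsTransversal T ∧ T.card = n}) ⟨T.card, T, hT, rfl⟩

lemma edges_delete_singleton (H : FinHypergraph α) (v : α) :
    (H.delete {v}).edges = H.edges.filter (fun e => v ∉ e) := by
  simp [delete]

lemma Wellformed.delete {H : FinHypergraph α} (hw : H.Wellformed) (X : Finset α) :
    (H.delete X).Wellformed := by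
  intro e he x hx
  rw [FinHypergraph.delete, Finset.mem_filter] at he
  exact Finset.mem_sdiff.2 ⟨hw e he.1 hx, fun hX => he.2 x hX hx⟩

lemma Uniform.delete {H : FinHypergraph α} {k : ℕ} (hu : H.Uniform k) (X : Finset α) :
    (H.delete X).Uniform k :=
  fun e he => hu e (Finset.mem_filter.1 he).1

lemma Linear.delete {H : FinHypergraph α} (hl : H.Linear) (X : Finset α) :
    (H.delete X).Linear :=
  fun e he f hf => hl e (Finset.mem_filter.1 he).1 f (Finset.mem_filter.1 hf).1

lemma card_verts_delete_singleton {H : FinHypergraph α} {v : α} (hv : v ∈ H.verts) :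
    (H.delete {v}).verts.card + 1 = H.verts.card := by
  simp only [FinHypergraph.delete, Finset.sdiff_singleton_eq_erase]
  exact Finset.card_erase_add_one hv

lemma degree_add_card_edges_delete_singleton (H : FinHypergraph α) (v : α) :
    H.degree v + (H.delete {v}).edges.card = H.edges.card := by
  rw [edges_delete_singleton]
  exact Finset.card_filter_add_card_filter_not _

lemma mem_verts_of_degree_pos {H : FinHypergraph α} (hw : H.Wellformed) {v : α}
    (hv : 0 < H.degree v) : v ∈ H.verts := by
  obtain ⟨e, he⟩ := Finset.card_pos.1 hv
  rw [Finset.mem_filter] at he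
  exact hw e he.1 he.2

lemma tau_le_tau_delete_singleton_add_one {H : FinHypergraph α} {v : α} (hv : v ∈ H.verts) :
    H.tau ≤ (H.delete {v}).tau + 1 := by
  by_cases hH : ∃ T, H.IsTransversal T
  swap
  · simp [tau_eq_zero_of_forall_not_isTransversal (not_exists.1 hH)]
  have hH' : ∃ T, (H.delete {v}).IsTransversal T := by
    obtain ⟨T, hTV, hTe⟩ := hH
    refine ⟨T.erase v, Finset.erase_subset_erase v hTV |>.trans_eq
      (Finset.sdiff_singleton_eq_erase v _).symm, fun e he => ?_⟩
    rw [edges_delete_singleton, Finset.mem_filter] at he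
    obtain ⟨x, hx⟩ := hTe e he.1
    rw [Finset.mem_inter] at hx
    exact ⟨x, Finset.mem_inter.2 ⟨Finset.mem_erase.2 ⟨fun h => he.2 (h ▸ hx.2), hx.1⟩, hx.2⟩⟩
  obtain ⟨T', ⟨hT'V, hT'e⟩, hT'card⟩ := exists_isTransversal_card_eq_tau hH'
  have hT : H.IsTransversal (insert v T') := by
    refine ⟨Finset.insert_subset hv (hT'V.trans Finset.sdiff_subset), fun e he => ?_⟩
    by_cases hve : v ∈ e
    · exact ⟨v, Finset.mem_inter.2 ⟨Finset.mem_insert_self v T', hve⟩⟩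
    · have he' : e ∈ (H.delete {v}).edges := by
        rw [edges_delete_singleton, Finset.mem_filter]
        exact ⟨he, hve⟩
      exact (hT'e e he').mono (Finset.inter_subset_inter_right (Finset.subset_insert v T'))
  calc H.tau ≤ (insert v T').card := tau_le_card hT
    _ ≤ T'.card + 1 := Finset.card_insert_le v T'
    _ = (H.delete {v}).tau + 1 := by rw [hT'card]

lemma sum_degree_eq_sum_card_edges {H : FinHypergraph α} (hw : H.Wellformed) :
    ∑ v ∈ H.verts, H.degree v = ∑ e ∈ H.edges, e.card := by
  simp only [degree, Finset.card_filter]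
  rw [Finset.sum_comm]
  refine Finset.sum_congr rfl fun e he => ?_
  rw [← Finset.card_filter, Finset.filter_mem_eq_inter, Finset.inter_eq_right.2 (hw e he)]

lemma mul_card_edges_le_of_degree_le {H : FinHypergraph α} (hw : H.Wellformed) {k d : ℕ}
    (hu : H.Uniform k) (hd : ∀ v, H.degree v ≤ d) :
    k * H.edges.card ≤ d * H.verts.card :=
  calc k * H.edges.card = ∑ e ∈ H.edges, e.card := by
        rw [Finset.sum_congr rfl hu, Finset.sum_const, smul_eq_mul, mul_comm]
    _ = ∑ v ∈ H.verts, H.degree v := (sum_degree_eq_sum_card_edges hw).symm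
    _ ≤ ∑ _v ∈ H.verts, d := Finset.sum_le_sum fun v _ => hd v
    _ = d * H.verts.card := by rw [Finset.sum_const, smul_eq_mul, mul_comm]

lemma verts_add_edges_div_five_le {H : FinHypergraph α} (hw : H.Wellformed) (hu : H.Uniform 4)
    (hd : ∀ v, H.degree v ≤ 6) :
    ((H.verts.card : ℚ) + H.edges.card) / 5 ≤ (H.verts.card : ℚ) / 4 + H.edges.card / 6 := by
  have h : ((4 * H.edges.card : ℕ) : ℚ) ≤ (6 * H.verts.card : ℕ) := by
    exact_mod_cast mul_card_edges_le_of_degree_le hw hu hd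
  push_cast at h
  linarith

theorem tau_le_of_tau_le_of_degree_le_six
    (hbase : ∀ H : FinHypergraph α, H.Wellformed → H.Uniform 4 → H.Linear →
      (∀ v, H.degree v ≤ 6) → (H.tau : ℚ) ≤ (H.verts.card : ℚ) / 4 + H.edges.card / 6)
    (H : FinHypergraph α) (hw : H.Wellformed) (hu : H.Uniform 4) (hl : H.Linear) :
    (H.tau : ℚ) ≤ (H.verts.card : ℚ) / 4 + H.edges.card / 6 := by
  by_cases hdeg : ∃ v, 7 ≤ H.degree v
  · obtain ⟨v, hv⟩ := hdeg
    have hvV : v ∈ H.verts := mem_verts_of_degree_pos hw (by omega)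
    have hcard := card_verts_delete_singleton hvV
    have ih := tau_le_of_tau_le_of_degree_le_six hbase (H.delete {v})
      (hw.delete {v}) (hu.delete {v}) (hl.delete {v})
    have hn : ((H.delete {v}).verts.card : ℚ) + 1 = H.verts.card := by exact_mod_cast hcard
    have hm : (H.degree v : ℚ) + (H.delete {v}).edges.card = H.edges.card := by
      exact_mod_cast degree_add_card_edges_delete_singleton H v
    have hτ : (H.tau : ℚ) ≤ (H.delete {v}).tau + 1 := by
      exact_mod_cast tau_le_tau_delete_singleton_add_one hvV
    have h7 : (7 : ℚ) ≤ H.degree v := by exact_mod_cast hv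
    linarith
  · exact hbase H hw hu hl fun v => Nat.lt_succ_iff.1 (not_le.1 (not_exists.1 hdeg v))
termination_by H.verts.card
decreasing_by omega

end FinHypergraph

/-- If every 4-uniform linear hypergraph `H'` satisfies `τ(H') ≤ (n(H') + m(H'))/5`,
then every 4-uniform linear hypergraph `H` on `n` vertices with `m` edges
satisfies `τ(H) ≤ n/4 + m/6`. -/
theorem stmt4 {α : Type} [DecidableEq α] (H : FinHypergraph α)
    (hw : H.Wellformed) (hu : H.Uniform 4) (hl : H.Linear)
    (hyp : ∀ H' : FinHypergraph α, H'.Wellformed → H'.Uniform 4 → H'.Linear →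
      (H'.tau : ℚ) ≤ ((H'.verts.card : ℚ) + (H'.edges.card : ℚ)) / 5) :
    (H.tau : ℚ) ≤ (H.verts.card : ℚ) / 4 + (H.edges.card : ℚ) / 6 :=
  FinHypergraph.tau_le_of_tau_le_of_degree_le_six
    (fun H' hw' hu' hl' hd => (hyp H' hw' hu' hl').trans
      (FinHypergraph.verts_add_edges_div_five_le hw' hu' hd))
    H hw hu hl
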